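/- arXiv:2104.00963 — 4 statements merged into one kernel-verified Lean document; each statement's English description precedes it below -/
import Mathlib

section
/- Let Q : [0,∞) → (0, 1/e] be differentiable and satisfy Q'(t) ≤ (2C/ε) A(t) Q(t) √(|log Q(t)|) on [0,T], where A : [0,T] → [0,∞) is integrable, C > 0 and 0 < ε ≤ 1. If √(|log Q(0)|) ≥ (C/ε)∫₀ᵗ A(s) ds, then Q(t) ≤ exp(−(√(|log Q(0)|) − (C/ε)∫₀ᵗ A(s) ds)²) for all t ∈ [0,T]. -/
open Real MeasureTheory Set

theorem stmt_1 (T C ε : ℝ) (hT : 0 < T) (hC : 0 < C) (hε : 0 < ε) (hε1 : ε ≤ 1)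
    (Q A : ℝ → ℝ)
    (hQrange : ∀ t ∈ Icc (0:ℝ) T, 0 < Q t ∧ Q t ≤ Real.exp (-1))
    (hA : ∀ t ∈ Icc (0:ℝ) T, 0 ≤ A t)
    (hAint : IntegrableOn A (Icc (0:ℝ) T))
    (hQdiff : ∀ t ∈ Icc (0:ℝ) T, DifferentiableAt ℝ Q t)
    (hineq : ∀ t ∈ Icc (0:ℝ) T,
      deriv Q t ≤ (2 * C / ε) * A t * Q t * Real.sqrt |Real.log (Q t)|)
    (hinit : ∀ t ∈ Icc (0:ℝ) T,
      (C / ε) * ∫ s in (0:ℝ)..t, A s ≤ Real.sqrt |Real.log (Q 0)|) :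
    ∀ t ∈ Icc (0:ℝ) T,
      Q t ≤ Real.exp (-(Real.sqrt |Real.log (Q 0)| - (C / ε) * ∫ s in (0:ℝ)..t, A s) ^ 2) := by
  intro t ht
  -- Basic facts
  have hlog_le : ∀ s ∈ Icc (0:ℝ) T, Real.log (Q s) ≤ -1 := by
    intro s hs
    have h := (hQrange s hs).2
    calc Real.log (Q s) ≤ Real.log (Real.exp (-1)) :=
          Real.log_le_log (hQrange s hs).1 h
      _ = -1 := Real.log_exp _
  have habs : ∀ s ∈ Icc (0:ℝ) T, |Real.log (Q s)| = -Real.log (Q s) := by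
    intro s hs
    exact abs_of_neg (lt_of_le_of_lt (hlog_le s hs) (by norm_num))
  have hnl_ge : ∀ s ∈ Icc (0:ℝ) T, (1:ℝ) ≤ -Real.log (Q s) := by
    intro s hs; linarith [hlog_le s hs]
  -- the function y
  set y : ℝ → ℝ := fun s => Real.sqrt (-Real.log (Q s)) with hy
  have hsub : Icc (0:ℝ) t ⊆ Icc 0 T := Icc_subset_Icc le_rfl ht.2
  -- derivative of y
  have hyderiv : ∀ x ∈ Ioo (0:ℝ) t,
      HasDerivWithinAt y (-(deriv Q x / Q x) / (2 * Real.sqrt (-Real.log (Q x)))) (Ioi x) x := by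
    intro x hx
    have hxT : x ∈ Icc (0:ℝ) T := hsub ⟨hx.1.le, hx.2.le⟩
    have hQx : 0 < Q x := (hQrange x hxT).1
    have hlogd : HasDerivAt (fun s => -Real.log (Q s)) (-(deriv Q x / Q x)) x :=
      (((hQdiff x hxT).hasDerivAt).log hQx.ne').neg
    have hne : -Real.log (Q x) ≠ 0 := by
      have := hnl_ge x hxT; linarith
    exact (hlogd.sqrt hne).hasDerivWithinAt
  -- continuity of y on [0,t]
  have hycont : ContinuousOn y (Icc 0 t) := by
    intro s hs
    have hsT := hsub hs
    have h1 : ContinuousWithinAt Q (Icc 0 t) s :=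
      ((hQdiff s hsT).continuousAt).continuousWithinAt
    have h2 : ContinuousWithinAt (fun u => -Real.log (Q u)) (Icc 0 t) s :=
      ((Real.continuousAt_log (hQrange s hsT).1.ne').comp_continuousWithinAt h1).neg
    exact Real.continuous_sqrt.continuousAt.comp_continuousWithinAt h2
  -- comparison of derivative with -(C/ε) A
  have hcomp : ∀ x ∈ Ioo (0:ℝ) t,
      -(C / ε) * A x ≤ -(deriv Q x / Q x) / (2 * Real.sqrt (-Real.log (Q x))) := by
    intro x hx
    have hxT : x ∈ Icc (0:ℝ) T := hsub ⟨hx.1.le, hx.2.le⟩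
    have hQx : 0 < Q x := (hQrange x hxT).1
    have hS1 : (1:ℝ) ≤ Real.sqrt (-Real.log (Q x)) := by
      rw [show (1:ℝ) = Real.sqrt 1 by simp]
      exact Real.sqrt_le_sqrt (hnl_ge x hxT)
    have hSpos : 0 < Real.sqrt (-Real.log (Q x)) := lt_of_lt_of_le one_pos hS1
    have hi := hineq x hxT
    rw [habs x hxT] at hi
    rw [le_div_iff₀ (by positivity)]
    have hd : deriv Q x / Q x ≤ (2 * C / ε) * A x * Real.sqrt (-Real.log (Q x)) := by
      rw [div_le_iff₀ hQx]
      calc deriv Q x ≤ (2 * C / ε) * A x * Q x * Real.sqrt (-Real.log (Q x)) := hi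
        _ = (2 * C / ε) * A x * Real.sqrt (-Real.log (Q x)) * Q x := by ring
    have heq : -(C / ε) * A x * (2 * Real.sqrt (-Real.log (Q x)))
        = -((2 * C / ε) * A x * Real.sqrt (-Real.log (Q x))) := by ring
    linarith
  -- integrability of φ
  have hφint : IntegrableOn (fun s => -(C / ε) * A s) (Icc 0 t) :=
    (hAint.mono_set hsub).const_mul _
  -- apply FTC comparison
  have hkey := intervalIntegral.integral_le_sub_of_hasDeriv_right_of_le ht.1 hycont hyderiv hφint hcomp
  rw [intervalIntegral.integral_const_mul] at hkey
  have hAintpos : 0 ≤ ∫ s in (0:ℝ)..t, A s := by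
    apply intervalIntegral.integral_nonneg ht.1
    intro u hu; exact hA u (hsub hu)
  have h0T : (0:ℝ) ∈ Icc (0:ℝ) T := ⟨le_rfl, hT.le⟩
  have hy0 : y 0 = Real.sqrt |Real.log (Q 0)| := by rw [habs 0 h0T]
  -- y t ≥ y 0 - (C/ε) ∫ A
  have hyt : Real.sqrt |Real.log (Q 0)| - (C / ε) * ∫ s in (0:ℝ)..t, A s ≤ y t := by
    rw [← hy0]; linarith
  have hB : 0 ≤ Real.sqrt |Real.log (Q 0)| - (C / ε) * ∫ s in (0:ℝ)..t, A s :=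
    sub_nonneg.2 (hinit t ht)
  have hsq : (Real.sqrt |Real.log (Q 0)| - (C / ε) * ∫ s in (0:ℝ)..t, A s) ^ 2
      ≤ -Real.log (Q t) := by
    calc (Real.sqrt |Real.log (Q 0)| - (C / ε) * ∫ s in (0:ℝ)..t, A s) ^ 2
        ≤ (y t) ^ 2 := by nlinarith
      _ = -Real.log (Q t) := Real.sq_sqrt (by linarith [hnl_ge t ht])
  calc Q t = Real.exp (Real.log (Q t)) := (Real.exp_log (hQrange t ht).1).symm
    _ ≤ Real.exp (-(Real.sqrt |Real.log (Q 0)| - (C / ε) * ∫ s in (0:ℝ)..t, A s) ^ 2) :=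
        Real.exp_le_exp.2 (by linarith)
end

section
/- There exists a universal constant c₀ > 0 such that for all s ∈ (0, 1/e) and τ ∈ (0, c₀], if s/|log s| ≤ τ then s ≤ 2τ|log τ|. -/
open Real Set

theorem stmt_2 :
    ∃ c₀ : ℝ, 0 < c₀ ∧
      ∀ s ∈ Ioo (0:ℝ) (Real.exp (-1)), ∀ τ ∈ Ioc (0:ℝ) c₀,
        s / |Real.log s| ≤ τ → s ≤ 2 * τ * |Real.log τ| := by
  refine ⟨Real.exp (-1), Real.exp_pos _, ?_⟩
  rintro s ⟨hs0, hs1⟩ τ ⟨hτ0, hτ1⟩ h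
  have hlogs : Real.log s < -1 := by
    calc Real.log s < Real.log (Real.exp (-1)) := Real.log_lt_log hs0 hs1
    _ = -1 := Real.log_exp _
  have hlogτ : Real.log τ ≤ -1 := by
    calc Real.log τ ≤ Real.log (Real.exp (-1)) := Real.log_le_log hτ0 hτ1
    _ = -1 := Real.log_exp _
  have habs_s : |Real.log s| = -Real.log s := abs_of_neg (by linarith)
  have habs_τ : |Real.log τ| = -Real.log τ := abs_of_neg (by linarith)
  rw [habs_s] at h
  rw [habs_τ]
  have h' : s ≤ τ * (-Real.log s) := by
    rw [div_le_iff₀ (by linarith)] at h; linarith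
  rcases le_or_gt s τ with hc | hc
  · nlinarith
  · have : Real.log τ ≤ Real.log s := Real.log_le_log hτ0 hc.le
    nlinarith
end

section
/- Let D, E : [0,T] → ℝ be Lipschitz continuous functions with D ≥ 0, 0 < E < 1, and fix ε ∈ (0,1]. Define Q : [0,T] → (0,1) implicitly by Q(t) + ε⁻² D(t) log Q(t) = E(t). Then for every δ > 0, Q is Lipschitz continuous on the set {t : Q(t) > δ}, with Lipschitz constant depending only on δ, ε, and the Lipschitz constants and sup-norms of D and E. -/
open Real Set

theorem stmt_14 (δ ε LD LE MD : ℝ) (hδ : 0 < δ) (hε : 0 < ε) (hε1 : ε ≤ 1)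
    (hLD : 0 ≤ LD) (hLE : 0 ≤ LE) (hMD : 0 ≤ MD) :
    ∃ K : NNReal, ∀ (T : ℝ) (D E Q : ℝ → ℝ), 0 < T →
      LipschitzOnWith LD.toNNReal D (Icc 0 T) →
      LipschitzOnWith LE.toNNReal E (Icc 0 T) →
      (∀ t ∈ Icc (0:ℝ) T, 0 ≤ D t ∧ D t ≤ MD) →
      (∀ t ∈ Icc (0:ℝ) T, 0 < E t ∧ E t < 1) →
      (∀ t ∈ Icc (0:ℝ) T, Q t ∈ Ioo (0:ℝ) 1 ∧
        Q t + ε⁻¹ ^ 2 * D t * Real.log (Q t) = E t) →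
      LipschitzOnWith K Q {t | t ∈ Icc (0:ℝ) T ∧ δ < Q t} := by
  set c : ℝ := ε⁻¹ ^ 2 with hc
  have hc0 : 0 ≤ c := by positivity
  have hK0 : 0 ≤ LE + c * LD * |Real.log δ| := by positivity
  refine ⟨(LE + c * LD * |Real.log δ|).toNNReal, ?_⟩
  intro T D E Q hT hD hE hDb hEb hQ
  rw [lipschitzOnWith_iff_dist_le_mul]
  rintro s ⟨hsI, hsδ⟩ t ⟨htI, htδ⟩
  obtain ⟨⟨hQs0, hQs1⟩, heqs⟩ := hQ s hsI
  obtain ⟨⟨hQt0, hQt1⟩, heqt⟩ := hQ t htI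
  obtain ⟨hDs0, _⟩ := hDb s hsI
  have key : Q s - Q t + c * D s * (Real.log (Q s) - Real.log (Q t))
      = (E s - E t) - c * (D s - D t) * Real.log (Q t) := by
    linear_combination heqs - heqt
  have hab : 0 ≤ (Q s - Q t) * (Real.log (Q s) - Real.log (Q t)) := by
    rcases le_total (Q s) (Q t) with h | h
    · have := Real.log_le_log hQs0 h
      nlinarith
    · have := Real.log_le_log hQt0 h
      nlinarith
  have hγ : 0 ≤ c * D s := mul_nonneg hc0 hDs0
  have step1 : |Q s - Q t| ≤ |Q s - Q t + c * D s * (Real.log (Q s) - Real.log (Q t))| := by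
    set a := Q s - Q t with ha
    set b := Real.log (Q s) - Real.log (Q t) with hb
    rw [← sq_le_sq]
    nlinarith [mul_nonneg hγ hab, sq_nonneg (c * D s * b)]
  have hlog : |Real.log (Q t)| ≤ |Real.log δ| := by
    have h1 : Real.log (Q t) < 0 := Real.log_neg hQt0 hQt1
    have h2 : Real.log δ ≤ Real.log (Q t) := Real.log_le_log hδ (le_of_lt htδ)
    rw [abs_of_neg h1]
    calc -Real.log (Q t) ≤ -Real.log δ := by linarith
      _ ≤ |Real.log δ| := neg_le_abs _
  have hEd : |E s - E t| ≤ LE * |s - t| := by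
    have := hE.dist_le_mul s hsI t htI
    rwa [Real.dist_eq, Real.dist_eq, Real.coe_toNNReal _ hLE] at this
  have hDd : |D s - D t| ≤ LD * |s - t| := by
    have := hD.dist_le_mul s hsI t htI
    rwa [Real.dist_eq, Real.dist_eq, Real.coe_toNNReal _ hLD] at this
  have step2 : |Q s - Q t| ≤ (LE + c * LD * |Real.log δ|) * |s - t| := by
    have tri : |(E s - E t) - c * (D s - D t) * Real.log (Q t)|
        ≤ |E s - E t| + c * |D s - D t| * |Real.log (Q t)| := by
      calc |(E s - E t) - c * (D s - D t) * Real.log (Q t)|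
          ≤ |E s - E t| + |c * (D s - D t) * Real.log (Q t)| := abs_sub _ _
        _ = |E s - E t| + c * |D s - D t| * |Real.log (Q t)| := by
            rw [abs_mul, abs_mul, abs_of_nonneg hc0]
    have h3 : c * |D s - D t| * |Real.log (Q t)| ≤ c * LD * |Real.log δ| * |s - t| := by
      calc c * |D s - D t| * |Real.log (Q t)| ≤ c * (LD * |s - t|) * |Real.log δ| := by
            gcongr <;> positivity
        _ = c * LD * |Real.log δ| * |s - t| := by ring
    calc |Q s - Q t| ≤ |(E s - E t) - c * (D s - D t) * Real.log (Q t)| := key ▸ step1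
      _ ≤ |E s - E t| + c * |D s - D t| * |Real.log (Q t)| := tri
      _ ≤ LE * |s - t| + c * LD * |Real.log δ| * |s - t| := by linarith
      _ = (LE + c * LD * |Real.log δ|) * |s - t| := by ring
  rw [Real.dist_eq, Real.dist_eq, Real.coe_toNNReal _ hK0]
  exact step2
end

section
/- Let u : [0,T] → (0, 1/e] be absolutely continuous with u'(t) ≤ g(t) u(t) √(−log u(t)) a.e., with g ≥ 0 integrable, and set G(t) = ∫₀ᵗ g. If √(−log u(0)) ≥ G(t)/2 for all t ∈ [0,T], then √(−log u(t)) ≥ √(−log u(0)) − G(t)/2, i.e. u(t) ≤ exp(−(√(−log u(0)) − G(t)/2)²). -/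
open Real Set MeasureTheory intervalIntegral

/-- Choice of a small `η` making the key local ratio at most `1 + 2ε`. -/
lemma stmt16_eta {a ε : ℝ} (ha : 0 < a) (ha1 : a < 1) (hε : 0 < ε) :
    ∃ η : ℝ, 0 < η ∧ η < a ∧ a + η < 1 ∧
      (a + η) * Real.sqrt (-Real.log (a - η)) ≤
        (1 + 2 * ε) * (a * Real.sqrt (-Real.log (a + η))) := by
  have hla : 0 < -Real.log a := by
    have := Real.log_neg ha ha1
    linarith
  set F : ℝ → ℝ := fun η =>
    (1 + 2 * ε) * (a * Real.sqrt (-Real.log (a + η))) -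
      (a + η) * Real.sqrt (-Real.log (a - η)) with hF
  have hcont : ContinuousAt F 0 := by
    have hlog1 : ContinuousAt (fun η : ℝ => Real.log (a + η)) 0 := by
      have : ContinuousAt Real.log (a + 0) :=
        Real.continuousAt_log (by simpa using ha.ne')
      exact this.comp ((continuous_const.add continuous_id).continuousAt)
    have hlog2 : ContinuousAt (fun η : ℝ => Real.log (a - η)) 0 := by
      have : ContinuousAt Real.log (a - 0) :=
        Real.continuousAt_log (by simpa using ha.ne')
      exact this.comp ((continuous_const.sub continuous_id).continuousAt)
    have hs1 : ContinuousAt (fun η : ℝ => Real.sqrt (-Real.log (a + η))) 0 :=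
      Real.continuous_sqrt.continuousAt.comp hlog1.neg
    have hs2 : ContinuousAt (fun η : ℝ => Real.sqrt (-Real.log (a - η))) 0 :=
      Real.continuous_sqrt.continuousAt.comp hlog2.neg
    exact (continuousAt_const.mul (continuousAt_const.mul hs1)).sub
      ((continuous_const.add continuous_id).continuousAt.mul hs2)
  have hF0 : 0 < F 0 := by
    have hs : 0 < Real.sqrt (-Real.log a) := Real.sqrt_pos.2 hla
    simp only [hF, add_zero, sub_zero]
    nlinarith [mul_pos (mul_pos hε ha) hs]
  have h1 : ∀ᶠ η in nhds (0 : ℝ), 0 < F η :=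
    hcont.tendsto.eventually (eventually_gt_nhds hF0)
  have h2 : ∀ᶠ η in nhds (0 : ℝ), η < a := eventually_lt_nhds ha
  have h3 : ∀ᶠ η in nhds (0 : ℝ), η < 1 - a := eventually_lt_nhds (by linarith)
  have h4 : ∀ᶠ η in nhdsWithin (0 : ℝ) (Ioi 0), 0 < η ∧ η < a ∧ η < 1 - a ∧ 0 < F η := by
    filter_upwards [eventually_mem_nhdsWithin,
      (h1.and (h2.and h3)).filter_mono nhdsWithin_le_nhds] with η hη h
    exact ⟨hη, h.2.1, h.2.2, h.1⟩
  obtain ⟨η, hη0, hηa, hη1, hηF⟩ := h4.exists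
  exact ⟨η, hη0, hηa, by linarith, by simp only [hF] at hηF; linarith⟩

/-- The key scalar inequality for one step of the continuous induction. -/
lemma stmt16_scalar {a w η ε δ B : ℝ} (ha : 0 < a) (ha1 : a < 1) (hw0 : 0 < w)
    (hwub : w ≤ a + η) (hη0 : 0 < η) (hη1 : a + η < 1)
    (hW : w - a ≤ δ * B) (hδ : 0 ≤ δ) (hε : 0 < ε)
    (hB0 : 0 ≤ B)
    (hBq : B ≤ (1 + 2 * ε) * (a * Real.sqrt (-Real.log (a + η)))) :
    Real.sqrt (-Real.log a) - Real.sqrt (-Real.log w) ≤ (1 / 2 + ε) * δ := by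
  set q : ℝ := Real.sqrt (-Real.log (a + η)) with hq
  have hq0 : 0 < q := Real.sqrt_pos.2 (by
    have := Real.log_neg (by linarith) hη1; linarith)
  rcases le_or_gt w a with hwa | haw
  · -- u decreased: sqrt(-log) increased
    have : Real.sqrt (-Real.log a) ≤ Real.sqrt (-Real.log w) := by
      apply Real.sqrt_le_sqrt
      have := Real.log_le_log hw0 hwa
      linarith
    nlinarith
  · set La := -Real.log a with hLa
    set Lw := -Real.log w with hLw
    have hLa0 : 0 ≤ La := by
      have := Real.log_nonpos ha.le ha1.le; simp only [hLa]; linarith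
    have hLw0 : 0 ≤ Lw := by
      have := Real.log_nonpos hw0.le (by linarith : w ≤ 1); simp only [hLw]; linarith
    have hsqa : Real.sqrt La ^ 2 = La := Real.sq_sqrt hLa0
    have hsqw : Real.sqrt Lw ^ 2 = Lw := Real.sq_sqrt hLw0
    have hmono : Real.sqrt Lw ≤ Real.sqrt La := by
      apply Real.sqrt_le_sqrt
      have := Real.log_le_log ha haw.le
      simp only [hLa, hLw]; linarith
    have hqa : q ≤ Real.sqrt La := by
      apply Real.sqrt_le_sqrt
      have := Real.log_le_log ha (by linarith : a ≤ a + η)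
      simp only [hLa]; linarith
    have hqw : q ≤ Real.sqrt Lw := by
      apply Real.sqrt_le_sqrt
      have := Real.log_le_log hw0 hwub
      simp only [hLw]; linarith
    -- log estimate : a * (La - Lw) ≤ w - a
    have hlog : a * (La - Lw) ≤ w - a := by
      have h1 : Real.log (w / a) ≤ w / a - 1 := Real.log_le_sub_one_of_pos (by positivity)
      have h2 : Real.log (w / a) = Real.log w - Real.log a := Real.log_div hw0.ne' ha.ne'
      rw [h2] at h1
      have h3 : a * (Real.log w - Real.log a) ≤ a * (w / a - 1) :=
        mul_le_mul_of_nonneg_left h1 ha.le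
      have h4 : a * (w / a - 1) = w - a := by field_simp
      simp only [hLa, hLw]
      nlinarith [h3, h4]
    have d0 : 0 ≤ Real.sqrt La - Real.sqrt Lw := by linarith
    have e1 : (Real.sqrt La - Real.sqrt Lw) * (Real.sqrt La + Real.sqrt Lw) = La - Lw := by
      nlinarith [hsqa, hsqw]
    have k1 : (Real.sqrt La - Real.sqrt Lw) * (2 * q) ≤ La - Lw := by
      nlinarith [mul_le_mul_of_nonneg_left (by linarith : 2 * q ≤ Real.sqrt La + Real.sqrt Lw) d0]
    have k2 : a * (La - Lw) ≤ δ * ((1 + 2 * ε) * (a * q)) := by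
      have : δ * B ≤ δ * ((1 + 2 * ε) * (a * q)) := mul_le_mul_of_nonneg_left hBq hδ
      linarith
    have k3 : (Real.sqrt La - Real.sqrt Lw) * (2 * (q * a)) ≤ ((1 / 2 + ε) * δ) * (2 * (q * a)) := by
      nlinarith [mul_le_mul_of_nonneg_right k1 ha.le]
    have := le_of_mul_le_mul_right k3 (by positivity : (0:ℝ) < 2 * (q * a))
    simpa [hLa, hLw] using this

theorem stmt_16 (T : ℝ) (hT : 0 < T) (u g : ℝ → ℝ)
    (hurange : ∀ t ∈ Icc (0:ℝ) T, 0 < u t ∧ u t ≤ Real.exp (-1))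
    (hg : ∀ t ∈ Icc (0:ℝ) T, 0 ≤ g t)
    (hgint : IntervalIntegrable g volume 0 T)
    (huderiv : IntegrableOn (deriv u) (Icc (0:ℝ) T))
    (hAC : ∀ s ∈ Icc (0:ℝ) T, ∀ t ∈ Icc (0:ℝ) T, s ≤ t →
      u t - u s = ∫ x in s..t, deriv u x)
    (hineq : ∀ᵐ t ∂(volume.restrict (Icc (0:ℝ) T)),
      deriv u t ≤ g t * u t * Real.sqrt (-Real.log (u t)))
    (hinit : ∀ t ∈ Icc (0:ℝ) T,
      (∫ s in (0:ℝ)..t, g s) / 2 ≤ Real.sqrt (-Real.log (u 0))) :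
    ∀ t ∈ Icc (0:ℝ) T,
      Real.sqrt (-Real.log (u 0)) - (∫ s in (0:ℝ)..t, g s) / 2
          ≤ Real.sqrt (-Real.log (u t)) ∧
      u t ≤ Real.exp (-(Real.sqrt (-Real.log (u 0)) - (∫ s in (0:ℝ)..t, g s) / 2) ^ 2) := by
  have hexp1 : Real.exp (-1 : ℝ) < 1 := by
    rw [Real.exp_lt_one_iff]; norm_num
  have hu1 : ∀ t ∈ Icc (0:ℝ) T, u t < 1 := fun t ht =>
    lt_of_le_of_lt (hurange t ht).2 hexp1
  -- clamp
  set pj : ℝ → ℝ := fun t => max 0 (min t T) with hpj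
  have hpjmem : ∀ t, pj t ∈ Icc (0:ℝ) T := fun t =>
    ⟨le_max_left _ _, max_le hT.le (min_le_right _ _)⟩
  have hpjeq : ∀ t ∈ Icc (0:ℝ) T, pj t = t := fun t ht => by
    simp only [hpj]; rw [min_eq_left ht.2, max_eq_right ht.1]
  have hpjcont : Continuous pj := continuous_const.max (continuous_id.min continuous_const)
  -- primitive representation of u
  have hrep : ∀ t ∈ Icc (0:ℝ) T, u t = u 0 + ∫ x in (0:ℝ)..t, deriv u x := by
    intro t ht
    have := hAC 0 ⟨le_rfl, hT.le⟩ t ht ht.1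
    linarith
  have huIcc : uIcc (0:ℝ) T = Icc (0:ℝ) T := uIcc_of_le hT.le
  have hprim : ContinuousOn (fun b => ∫ x in (0:ℝ)..b, deriv u x) (Icc (0:ℝ) T) := by
    have := continuousOn_primitive_interval (μ := volume) (a := 0) (b := T)
      (f := deriv u) (by rwa [huIcc])
    rwa [huIcc] at this
  set U : ℝ → ℝ := fun t => u (pj t) with hU
  have hUc : Continuous U := by
    have h1 : Continuous (fun t => u 0 + ∫ x in (0:ℝ)..(pj t), deriv u x) :=
      continuous_const.add (hprim.comp_continuous hpjcont hpjmem)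
    exact h1.congr fun t => (hrep (pj t) (hpjmem t)).symm
  have hucont : ContinuousOn u (Icc (0:ℝ) T) := by
    apply hUc.continuousOn.congr
    intro t ht
    simp only [hU, hpjeq t ht]
  set Γ : ℝ → ℝ := fun t => ∫ s in (0:ℝ)..(pj t), g s with hΓ
  have hΓc : Continuous Γ := by
    have h1 : ContinuousOn (fun b => ∫ x in (0:ℝ)..b, g x) (Icc (0:ℝ) T) := by
      have := continuousOn_primitive_interval' (μ := volume) hgint
        (a := 0) left_mem_uIcc
      rwa [huIcc] at this
    exact h1.comp_continuous hpjcont hpjmem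
  have hYc : Continuous (fun t => Real.sqrt (-Real.log (U t))) := by
    refine Real.continuous_sqrt.comp (Continuous.neg ?_)
    refine Real.continuousOn_log.comp_continuous hUc fun t => ?_
    exact (hurange (pj t) (hpjmem t)).1.ne'
  set y0 : ℝ := Real.sqrt (-Real.log (u 0)) with hy0
  -- main ε-claim
  have main : ∀ ε : ℝ, 0 < ε → ∀ t ∈ Icc (0:ℝ) T,
      y0 - (1 / 2 + ε) * (∫ s in (0:ℝ)..t, g s) ≤ Real.sqrt (-Real.log (u t)) := by
    intro ε hε
    set S : Set ℝ := {t | y0 - (1 / 2 + ε) * Γ t ≤ Real.sqrt (-Real.log (U t))} with hS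
    have hSclosed : IsClosed (S ∩ Icc (0:ℝ) T) := by
      apply IsClosed.inter _ isClosed_Icc
      exact isClosed_le (continuous_const.sub (continuous_const.mul hΓc)) hYc
    have h0S : (0:ℝ) ∈ S := by
      have hpj0 : pj 0 = 0 := hpjeq 0 ⟨le_rfl, hT.le⟩
      simp only [hS, mem_setOf_eq, hΓ, hU, hpj0, intervalIntegral.integral_same]
      simp [hy0]
    have hgt : ∀ x ∈ S ∩ Ico (0:ℝ) T, ∀ z ∈ Ioi x, (S ∩ Ioc x z).Nonempty := by
      rintro x ⟨hxS, hx0, hxT⟩ z hz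
      have hxmem : x ∈ Icc (0:ℝ) T := ⟨hx0, hxT.le⟩
      set a : ℝ := u x with haa
      have ha : 0 < a := (hurange x hxmem).1
      have ha1 : a < 1 := hu1 x hxmem
      obtain ⟨η, hη0, hηa, hη1, hηkey⟩ := stmt16_eta ha ha1 hε
      -- continuity of U at x gives control of oscillation
      have hUx : U x = a := by simp only [hU, hpjeq x hxmem]; rfl
      obtain ⟨δ₀, hδ₀, hδball⟩ := Metric.continuousAt_iff.1 hUc.continuousAt η hη0
      set t' : ℝ := min (min z (x + δ₀ / 2)) T with ht'
      have hxt' : x < t' := lt_min (lt_min hz (by linarith)) hxT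
      have ht'z : t' ≤ z := le_trans (min_le_left _ _) (min_le_left _ _)
      have ht'T : t' ≤ T := min_le_right _ _
      have ht'mem : t' ∈ Icc (0:ℝ) T := ⟨le_trans hx0 hxt'.le, ht'T⟩
      have hsubIcc : Icc x t' ⊆ Icc (0:ℝ) T := Icc_subset_Icc hx0 ht'T
      have hosc : ∀ x' ∈ Icc x t', a - η ≤ u x' ∧ u x' ≤ a + η := by
        intro x' hx'
        have hx'mem : x' ∈ Icc (0:ℝ) T := hsubIcc hx'
        have hd : dist x' x < δ₀ := by
          rw [Real.dist_eq, abs_of_nonneg (by linarith [hx'.1])]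
          have : t' ≤ x + δ₀ / 2 := le_trans (min_le_left _ _) (min_le_right _ _)
          have := hx'.2
          linarith
        have := hδball hd
        rw [hUx] at this
        have : |U x' - a| < η := by rwa [Real.dist_eq] at this
        rw [hU] at this
        simp only [hpjeq x' hx'mem] at this
        have := abs_lt.1 this
        constructor <;> linarith [this.1, this.2]
      set B : ℝ := (a + η) * Real.sqrt (-Real.log (a - η)) with hB
      have hB0 : 0 ≤ B := by positivity
      set δG : ℝ := ∫ s in x..t', g s with hδG
      have hδGnn : 0 ≤ δG :=
        intervalIntegral.integral_nonneg hxt'.le fun s hs => hg s (hsubIcc hs)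
      -- interval integrability facts
      have hgx : IntervalIntegrable g volume x t' :=
        hgint.mono_set (by rw [huIcc, uIcc_of_le hxt'.le]; exact hsubIcc)
      have hdx : IntervalIntegrable (deriv u) volume x t' := by
        apply IntegrableOn.intervalIntegrable
        apply huderiv.mono_set
        rw [uIcc_of_le hxt'.le]; exact hsubIcc
      have hsqcont : ContinuousOn (fun x' => u x' * Real.sqrt (-Real.log (u x')))
          (uIcc x t') := by
        rw [uIcc_of_le hxt'.le]
        have h1 : ContinuousOn u (Icc x t') := hucont.mono hsubIcc
        refine h1.mul (Real.continuous_sqrt.comp_continuousOn (ContinuousOn.neg ?_))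
        refine Real.continuousOn_log.comp h1 fun s hs => ?_
        exact (hurange s (hsubIcc hs)).1.ne'
      have hfx : IntervalIntegrable (fun x' => g x' * (u x' * Real.sqrt (-Real.log (u x'))))
          volume x t' := hgx.mul_continuousOn hsqcont
      -- step 1 : u t' - a ≤ δG * B
      have hW : u t' - a ≤ δG * B := by
        have e0 : u t' - u x = ∫ x' in x..t', deriv u x' := hAC x hxmem t' ht'mem hxt'.le
        have e1 : (∫ x' in x..t', deriv u x') ≤
            ∫ x' in x..t', g x' * (u x' * Real.sqrt (-Real.log (u x'))) := by
          apply intervalIntegral.integral_mono_ae_restrict hxt'.le hdx hfx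
          have := ae_restrict_of_ae_restrict_of_subset hsubIcc hineq
          filter_upwards [this] with s hs
          simpa [mul_assoc] using hs
        have e2 : (∫ x' in x..t', g x' * (u x' * Real.sqrt (-Real.log (u x')))) ≤
            ∫ x' in x..t', g x' * B := by
          apply intervalIntegral.integral_mono_on hxt'.le hfx (hgx.mul_const B)
          intro s hs
          have hs' : s ∈ Icc (0:ℝ) T := hsubIcc hs
          have hgs : 0 ≤ g s := hg s hs'
          have hus : 0 < u s := (hurange s hs').1
          have h1 : u s ≤ a + η := (hosc s hs).2
          have h2 : Real.sqrt (-Real.log (u s)) ≤ Real.sqrt (-Real.log (a - η)) := by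
            apply Real.sqrt_le_sqrt
            have := Real.log_le_log (by linarith : (0:ℝ) < a - η) (hosc s hs).1
            linarith
          have h3 : u s * Real.sqrt (-Real.log (u s)) ≤ B := by
            rw [hB]
            apply mul_le_mul h1 h2 (Real.sqrt_nonneg _) (by linarith)
          exact mul_le_mul_of_nonneg_left h3 hgs
        have e3 : (∫ x' in x..t', g x' * B) = δG * B := by
          rw [intervalIntegral.integral_mul_const]
        linarith [e0, e1, e2, e3.le, e3.ge]
      -- step 2 : scalar inequality
      have hkey : Real.sqrt (-Real.log a) - Real.sqrt (-Real.log (u t')) ≤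
          (1 / 2 + ε) * δG := by
        apply stmt16_scalar ha ha1 (hurange t' ht'mem).1 (hosc t' ⟨hxt'.le, le_rfl⟩).2
          hη0 hη1 hW hδGnn hε hB0 hηkey
      -- step 3 : Γ additivity
      have hΓadd : Γ t' = Γ x + δG := by
        have h1 : (∫ s in (0:ℝ)..x, g s) + ∫ s in x..t', g s = ∫ s in (0:ℝ)..t', g s := by
          apply intervalIntegral.integral_add_adjacent_intervals
          · exact hgint.mono_set (by rw [huIcc, uIcc_of_le hx0]; exact Icc_subset_Icc le_rfl hxT.le)
          · exact hgx
        simp only [hΓ, hpjeq x hxmem, hpjeq t' ht'mem]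
        linarith
      refine ⟨t', ?_, hxt', ht'z⟩
      have hxS' : y0 - (1 / 2 + ε) * Γ x ≤ Real.sqrt (-Real.log a) := by
        have := hxS
        simp only [hS, mem_setOf_eq, hU, hpjeq x hxmem] at this
        exact this
      simp only [hS, mem_setOf_eq, hU, hpjeq t' ht'mem, hΓadd]
      have : (0:ℝ) ≤ (1 / 2 + ε) * δG := by positivity
      nlinarith [hxS', hkey]
    have hsub : Icc (0:ℝ) T ⊆ S := hSclosed.Icc_subset_of_forall_exists_gt h0S hgt
    intro t ht
    have := hsub ht
    simp only [hS, mem_setOf_eq, hU, hpjeq t ht, hΓ] at this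
    exact this
  -- pass to the limit ε → 0
  intro t ht
  set G : ℝ := ∫ s in (0:ℝ)..t, g s with hG
  have hGnn : 0 ≤ G :=
    intervalIntegral.integral_nonneg ht.1 fun s hs => hg s ⟨hs.1, le_trans hs.2 ht.2⟩
  have part1 : y0 - G / 2 ≤ Real.sqrt (-Real.log (u t)) := by
    by_contra hcon
    push_neg at hcon
    set d : ℝ := y0 - G / 2 - Real.sqrt (-Real.log (u t)) with hd
    have hdpos : 0 < d := by simp only [hd]; linarith
    have h2 := main (d / (G + 1)) (div_pos hdpos (by linarith)) t ht
    rw [← hG] at h2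
    have h3 : y0 - G / 2 - (d / (G + 1)) * G ≤ Real.sqrt (-Real.log (u t)) := by
      nlinarith [h2]
    have h4 : d ≤ (d / (G + 1)) * G := by simp only [hd]; linarith
    rw [div_mul_eq_mul_div, le_div_iff₀ (by linarith : (0:ℝ) < G + 1)] at h4
    nlinarith
  refine ⟨part1, ?_⟩
  have hr : 0 ≤ y0 - G / 2 := by
    have := hinit t ht
    rw [← hG] at this
    linarith
  have hlogt : 0 ≤ -Real.log (u t) := by
    have h1 : Real.log (u t) ≤ 0 := Real.log_nonpos (hurange t ht).1.le (hu1 t ht).le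
    linarith
  have hsq : (y0 - G / 2) ^ 2 ≤ -Real.log (u t) := by
    have := pow_le_pow_left₀ hr part1 2
    rwa [Real.sq_sqrt hlogt] at this
  have : Real.log (u t) ≤ -(y0 - G / 2) ^ 2 := by linarith
  calc u t = Real.exp (Real.log (u t)) := (Real.exp_log (hurange t ht).1).symm
    _ ≤ Real.exp (-(y0 - G / 2) ^ 2) := Real.exp_le_exp.2 this
end
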